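/- arXiv:2308.03338 — 2 statements merged into one kernel-verified Lean document; each statement's English description precedes it below -/
import Mathlib

section
/- Let X be a simplicial complex with a weak shelling ≺ and let σ be the last facet in ≺, with X' the union of the simplices on the other facets. Then for any W contained in the vertex set, the induced subcomplex (X' ∩ Δ(σ))[W] has at most 2 connected components, i.e., its 0-th reduced Z/2Z-homology has dimension at most 1. -/
open Finset

variable {V : Type*} [DecidableEq V] [Fintype V]

/-- An abstract simplicial complex: a finite collection of faces closed under subsets. -/
def IsComplex (X : Finset (Finset V)) : Prop :=
  ∀ s ∈ X, ∀ t, t ⊆ s → t ∈ X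

/-- A collection of faces is a simplex if it is the full power set of some vertex set
(possibly empty). -/
def IsSimplexC (Y : Finset (Finset V)) : Prop := ∃ τ : Finset V, Y = τ.powerset

/-- The induced subcomplex `X[W]`. -/
def indOn (X : Finset (Finset V)) (W : Finset V) : Finset (Finset V) :=
  X.filter (fun s => s ⊆ W)

/-- The `ℤ/2ℤ` boundary of a chain, a chain being recorded as the finite set of faces with
coefficient `1`.  The coefficient of `τ` in `∂ c` is the parity of the number of faces of `c`
covering `τ`.  (This includes the augmentation `∂₀`, with `∅` playing the role of the
generator of `C₋₁`, so homology is reduced homology.) -/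
def bdry (c : Finset (Finset V)) : Finset (Finset V) :=
  Finset.univ.filter (fun τ => Odd (c.filter (fun s => τ ⊆ s ∧ s.card = τ.card + 1)).card)

/-- Sum of chains over `ℤ/2ℤ` (symmetric difference). -/
def chAdd (c d : Finset (Finset V)) : Finset (Finset V) := (c \ d) ∪ (d \ c)

/-- An `n`-dimensional chain of `X` (each face has `n+1` vertices). -/
def IsNChain (X : Finset (Finset V)) (n : ℕ) (c : Finset (Finset V)) : Prop :=
  c ⊆ X ∧ ∀ s ∈ c, s.card = n + 1

/-- An `n`-cycle of `X` (reduced: `0`-cycles have evenly many vertices). -/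
def IsNCycle (X : Finset (Finset V)) (n : ℕ) (c : Finset (Finset V)) : Prop :=
  IsNChain X n c ∧ bdry c = ∅

/-- An `n`-boundary of `X`. -/
def IsNBdry (X : Finset (Finset V)) (n : ℕ) (c : Finset (Finset V)) : Prop :=
  ∃ d, IsNChain X (n + 1) d ∧ bdry d = c

/-- `X` is `d`-Leray: all reduced homology of induced subcomplexes vanishes in
dimensions `≥ d`. -/
def IsLeray (X : Finset (Finset V)) (d : ℕ) : Prop :=
  ∀ W : Finset V, ∀ i : ℕ, d ≤ i → ∀ c,
    IsNCycle (indOn X W) i c → IsNBdry (indOn X W) i c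

/-- The Leray number `L(X)`. -/
noncomputable def lerayNum (X : Finset (Finset V)) : ℕ := sInf {d | IsLeray X d}

/-- The facets (maximal faces) of `X`. -/
def facetsOf (X : Finset (Finset V)) : Finset (Finset V) :=
  X.filter (fun s => ∀ t ∈ X, s ⊆ t → s = t)

/-- `σ 0, …, σ (m-1)` is an enumeration (linear ordering) of the facets of `X`. -/
def IsFacetEnum (X : Finset (Finset V)) (m : ℕ) (σ : ℕ → Finset V) : Prop :=
  (∀ i, i < m → σ i ∈ facetsOf X) ∧ (∀ s ∈ facetsOf X, ∃ i, i < m ∧ σ i = s) ∧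
    (∀ i j, i < m → j < m → σ i = σ j → i = j)

/-- `X_j = ⋃_{i < j} Δ(σ i)`. -/
def cUnion (σ : ℕ → Finset V) (j : ℕ) : Finset (Finset V) :=
  (Finset.range j).biUnion (fun i => (σ i).powerset)

-- `Mval σ j = M_≺(X_{j+1})`: starts at `1`, increases by `1` exactly when the newly
-- attached simplex meets the union of the previous ones in a non-simplex.
open Classical in
noncomputable def Mval (σ : ℕ → Finset V) : ℕ → ℕ
  | 0 => 1
  | (j+1) => Mval σ j + (if IsSimplexC (cUnion σ (j+1) ∩ (σ (j+1)).powerset) then 0 else 1)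

/-- `M(X)`: the minimum of `M_≺(X)` over all facet orderings. -/
noncomputable def Mnum (X : Finset (Finset V)) : ℕ :=
  sInf {k | ∃ m σ, 0 < m ∧ IsFacetEnum X m σ ∧ k = Mval σ (m - 1)}

/-- The facet ordering `σ 0 ≺ ⋯ ≺ σ (m-1)` is a weak shelling. -/
def IsWeakShelling (σ : ℕ → Finset V) (m : ℕ) : Prop :=
  ∀ j, 1 ≤ j → j < m → ∃ u ∈ σ j, IsSimplexC (indOn (cUnion σ j) ((σ j).erase u))

/-- `c` is the edge set of a cycle (graph cycle, length `≥ 3`). -/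
def IsCycleEdges (c : Finset (Finset V)) : Prop :=
  ∃ n : ℕ, 3 ≤ n ∧ ∃ f : ℕ → V, (∀ i j, i < n → j < n → f i = f j → i = j) ∧
    c = (Finset.range n).image (fun i => ({f i, f ((i + 1) % n)} : Finset V))

lemma bdry_empty : bdry (∅ : Finset (Finset V)) = ∅ := by
  simp [bdry]

lemma cycle0_even {Z c : Finset (Finset V)} (h : IsNCycle Z 0 c) : Even c.card := by
  have h0 : (∅ : Finset V) ∉ bdry c := by rw [h.2]; exact notMem_empty _
  rw [bdry, mem_filter] at h0
  push_neg at h0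
  have h1 := h0 (mem_univ _)
  rw [Nat.not_odd_iff_even] at h1
  have hf : c.filter (fun s => (∅ : Finset V) ⊆ s ∧ s.card = (∅ : Finset V).card + 1) = c := by
    apply filter_true_of_mem
    intro s hs
    exact ⟨empty_subset _, by simpa using h.1.2 s hs⟩
  rwa [hf] at h1

lemma pair_of_mem_erase {c : Finset (Finset V)} {b : V} (hcard : ∀ s ∈ c, s.card = 1)
    {t : Finset V} (ht : t ∈ c.erase {b}) : ∃ v, v ≠ b ∧ t = {v} := by
  obtain ⟨v, rfl⟩ := card_eq_one.mp (hcard t (mem_of_mem_erase ht))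
  refine ⟨v, fun h => (ne_of_mem_erase ht) (by rw [h]), rfl⟩

lemma hub_bdry {Z c : Finset (Finset V)} (hsub : c ⊆ Z) (hcard : ∀ s ∈ c, s.card = 1)
    (heven : Even c.card) (b : V)
    (hedge : ∀ s ∈ c, s ≠ {b} → insert b s ∈ Z) :
    IsNBdry Z 0 c := by
  classical
  refine ⟨(c.erase {b}).image (insert b), ⟨?_, ?_⟩, ?_⟩
  · intro s hs
    obtain ⟨t, ht, rfl⟩ := mem_image.mp hs
    exact hedge t (mem_of_mem_erase ht) (ne_of_mem_erase ht)
  · intro s hs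
    obtain ⟨t, ht, rfl⟩ := mem_image.mp hs
    obtain ⟨v, hvb, rfl⟩ := pair_of_mem_erase hcard ht
    rw [card_insert_of_notMem (by simp [Ne.symm hvb])]
    simp
  · have hinj : Set.InjOn (insert b) ((c.erase {b} : Finset (Finset V)) : Set (Finset V)) := by
      intro t ht t' ht' h
      rw [Finset.mem_coe] at ht ht'
      obtain ⟨v, hvb, rfl⟩ := pair_of_mem_erase hcard ht
      obtain ⟨v', hvb', rfl⟩ := pair_of_mem_erase hcard ht'
      have hv : v ∈ insert b ({v'} : Finset V) := by
        rw [← h]; exact mem_insert_of_mem (mem_singleton_self v)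
      rcases mem_insert.mp hv with h1 | h1
      · exact absurd h1 hvb
      · rw [mem_singleton] at h1; rw [h1]
    ext τ
    rw [bdry, mem_filter]
    have hcount : ∀ P : Finset V → Prop, ∀ _ : DecidablePred P,
        (((c.erase {b}).image (insert b)).filter P).card
          = ((c.erase {b}).filter (fun t => P (insert b t))).card := by
      intro P hP
      rw [Finset.filter_image]
      exact Finset.card_image_of_injOn (hinj.mono (by exact_mod_cast filter_subset _ _))
    rw [hcount _ inferInstance]
    simp only [mem_univ, true_and]
    by_cases hτc : τ.card = 1
    · obtain ⟨v₀, rfl⟩ := card_eq_one.mp hτc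
      by_cases hvb : v₀ = b
      · subst hvb
        have hfil : (c.erase {v₀}).filter
            (fun t => ({v₀} : Finset V) ⊆ insert v₀ t ∧ (insert v₀ t).card = ({v₀} : Finset V).card + 1)
            = c.erase {v₀} := by
          apply filter_true_of_mem
          intro t ht
          obtain ⟨v, hvb, rfl⟩ := pair_of_mem_erase hcard ht
          constructor
          · exact singleton_subset_iff.mpr (mem_insert_self _ _)
          · rw [card_insert_of_notMem (by simp [Ne.symm hvb])]; simp
        rw [hfil]
        by_cases hb : ({v₀} : Finset V) ∈ c
        · rw [card_erase_of_mem hb]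
          have h1 : 1 ≤ c.card := card_pos.mpr ⟨_, hb⟩
          simp [hb, Nat.Even.sub_odd h1 heven odd_one]
        · rw [erase_eq_of_notMem hb]
          simp [hb, Nat.not_odd_iff_even.mpr heven]
      · have hfil : (c.erase {b}).filter
            (fun t => ({v₀} : Finset V) ⊆ insert b t ∧ (insert b t).card = ({v₀} : Finset V).card + 1)
            = (c.erase {b}).filter (fun t => t = {v₀}) := by
          apply filter_congr
          intro t ht
          obtain ⟨v, hv, rfl⟩ := pair_of_mem_erase hcard ht
          simp only [singleton_subset_iff, mem_insert, mem_singleton, card_singleton]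
          constructor
          · rintro ⟨(h1 | h1), _⟩
            · exact absurd h1 hvb
            · simp [h1]
          · rintro h1
            have : v = v₀ := by simpa using h1
            subst this
            refine ⟨Or.inr rfl, ?_⟩
            rw [card_insert_of_notMem (by simp [Ne.symm hv])]; simp
        rw [hfil, filter_eq']
        by_cases hmem : ({v₀} : Finset V) ∈ c.erase {b}
        · simp only [hmem, if_true, card_singleton]
          simp [mem_of_mem_erase hmem]
        · simp only [hmem, if_false, card_empty]
          have : ({v₀} : Finset V) ∉ c := by
            intro hc
            exact hmem (mem_erase.mpr ⟨by simp [hvb], hc⟩)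
          simp [this]
    · have hfil : (c.erase {b}).filter
          (fun t => τ ⊆ insert b t ∧ (insert b t).card = τ.card + 1) = ∅ := by
        apply filter_false_of_mem
        intro t ht
        obtain ⟨v, hv, rfl⟩ := pair_of_mem_erase hcard ht
        rintro ⟨-, h2⟩
        rw [card_insert_of_notMem (by simp [Ne.symm hv])] at h2
        simp at h2
        exact hτc h2
      rw [hfil]
      have : τ ∉ c := fun hc => hτc (hcard τ hc)
      simp [this]


lemma cUnion_down {σ : ℕ → Finset V} {j : ℕ} {s t : Finset V}
    (hs : s ∈ cUnion σ j) (h : t ⊆ s) : t ∈ cUnion σ j := by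
  rw [cUnion, mem_biUnion] at hs ⊢
  obtain ⟨i, hi, hsi⟩ := hs
  exact ⟨i, hi, mem_powerset.mpr (h.trans (mem_powerset.mp hsi))⟩

/-- for a weak shelling with last facet `σ (m-1)` and
`X' = ⋃_{i<m-1} Δ(σ i)`, the complex `(X' ∩ Δ(σ_{m-1}))[W]` has at most two connected
components, i.e. `dim H̃₀ ≤ 1`: any two non-bounding `0`-cycles are homologous. -/
theorem weakShelling_last_intersection_components
    (X : Finset (Finset V)) (m : ℕ) (σ : ℕ → Finset V) (hX : IsComplex X)
    (hm : 1 ≤ m) (henum : IsFacetEnum X m σ) (hws : IsWeakShelling σ m) (W : Finset V) :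
    ∀ c₁ c₂,
      IsNCycle (indOn (cUnion σ (m-1) ∩ (σ (m-1)).powerset) W) 0 c₁ →
      IsNCycle (indOn (cUnion σ (m-1) ∩ (σ (m-1)).powerset) W) 0 c₂ →
      ¬ IsNBdry (indOn (cUnion σ (m-1) ∩ (σ (m-1)).powerset) W) 0 c₁ →
      ¬ IsNBdry (indOn (cUnion σ (m-1) ∩ (σ (m-1)).powerset) W) 0 c₂ →
      IsNBdry (indOn (cUnion σ (m-1) ∩ (σ (m-1)).powerset) W) 0 (chAdd c₁ c₂) := by
  classical
  intro c₁ c₂ hc₁ hc₂ h₁ h₂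
  set Z := indOn (cUnion σ (m-1) ∩ (σ (m-1)).powerset) W with hZ
  by_cases hm2 : 2 ≤ m
  · have hj1 : 1 ≤ m - 1 := by omega
    have hjm : m - 1 < m := by omega
    obtain ⟨u, hu, τ, hτ⟩ := hws (m-1) hj1 hjm
    have F2 : ∀ t : Finset V, t ⊆ τ → t ⊆ W → t ∈ Z := by
      intro t htτ htW
      have hmem : t ∈ indOn (cUnion σ (m-1)) ((σ (m-1)).erase u) := by
        rw [hτ]; exact mem_powerset.mpr htτ
      rw [indOn, mem_filter] at hmem
      rw [hZ, indOn, mem_filter, mem_inter, mem_powerset]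
      exact ⟨⟨hmem.1, hmem.2.trans (erase_subset u _)⟩, htW⟩
    have F3 : ∀ v : V, {v} ∈ Z → v ≠ u → v ∈ τ ∧ v ∈ W := by
      intro v hv hvu
      rw [hZ, indOn, mem_filter, mem_inter, mem_powerset] at hv
      have h1 : ({v} : Finset V) ⊆ (σ (m-1)).erase u := by
        intro x hx
        rw [mem_singleton] at hx; subst hx
        exact mem_erase.mpr ⟨hvu, hv.1.2 (mem_singleton_self _)⟩
      have h2 : ({v} : Finset V) ∈ indOn (cUnion σ (m-1)) ((σ (m-1)).erase u) := by
        rw [indOn, mem_filter]; exact ⟨hv.1.1, h1⟩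
      rw [hτ, mem_powerset, singleton_subset_iff] at h2
      exact ⟨h2, hv.2 (mem_singleton_self v)⟩
    have key : ∀ c : Finset (Finset V), c ⊆ Z → (∀ s ∈ c, s.card = 1) →
        Even c.card → ({u} : Finset V) ∉ c → IsNBdry Z 0 c := by
      intro c hsub hcards hev hnu
      rcases c.eq_empty_or_nonempty with rfl | ⟨s₀, hs₀⟩
      · exact ⟨∅, ⟨empty_subset _, fun s hs => absurd hs (notMem_empty _)⟩, bdry_empty⟩
      · obtain ⟨b, rfl⟩ := card_eq_one.mp (hcards s₀ hs₀)
        have hbu : b ≠ u := by rintro rfl; exact hnu hs₀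
        obtain ⟨hbτ, hbW⟩ := F3 b (hsub hs₀) hbu
        apply hub_bdry hsub hcards hev b
        intro s hs hsne
        obtain ⟨v, rfl⟩ := card_eq_one.mp (hcards s hs)
        have hvu : v ≠ u := by rintro rfl; exact hnu hs
        obtain ⟨hvτ, hvW⟩ := F3 v (hsub hs) hvu
        exact F2 _ (insert_subset_iff.mpr ⟨hbτ, singleton_subset_iff.mpr hvτ⟩)
          (insert_subset_iff.mpr ⟨hbW, singleton_subset_iff.mpr hvW⟩)
    have hu₁ : ({u} : Finset V) ∈ c₁ := by
      by_contra h
      exact h₁ (key c₁ hc₁.1.1 hc₁.1.2 (cycle0_even hc₁) h)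
    have hu₂ : ({u} : Finset V) ∈ c₂ := by
      by_contra h
      exact h₂ (key c₂ hc₂.1.1 hc₂.1.2 (cycle0_even hc₂) h)
    apply key (chAdd c₁ c₂)
    · rw [chAdd]
      exact union_subset ((sdiff_subset).trans hc₁.1.1) ((sdiff_subset).trans hc₂.1.1)
    · intro s hs
      rw [chAdd, mem_union, mem_sdiff, mem_sdiff] at hs
      rcases hs with ⟨hs, -⟩ | ⟨hs, -⟩
      · exact hc₁.1.2 s hs
      · exact hc₂.1.2 s hs
    · have e1 := cycle0_even hc₁
      have e2 := cycle0_even hc₂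
      have hA : (c₁ \ c₂).card + (c₁ ∩ c₂).card = c₁.card :=
        card_sdiff_add_card_inter c₁ c₂
      have hB : (c₂ \ c₁).card + (c₁ ∩ c₂).card = c₂.card := by
        rw [inter_comm]; exact card_sdiff_add_card_inter c₂ c₁
      rw [chAdd, card_union_of_disjoint disjoint_sdiff_sdiff]
      rw [Nat.even_iff] at e1 e2 ⊢
      omega
    · rw [chAdd, mem_union, mem_sdiff, mem_sdiff]
      rintro (⟨-, h⟩ | ⟨-, h⟩)
      · exact h hu₂
      · exact h hu₁
  · have hm1 : m - 1 = 0 := by omega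
    exfalso
    apply h₁
    have hZ0 : Z = ∅ := by
      rw [hZ, hm1]
      simp [cUnion, indOn]
    have hc : c₁ = ∅ := subset_empty.mp (hZ0 ▸ hc₁.1.1)
    subst hc
    exact ⟨∅, ⟨empty_subset _, fun s hs => absurd hs (notMem_empty _)⟩, bdry_empty⟩
end

section
/- Let X be a simplicial complex with facets σ_1, …, σ_m, all of dimension d−1 (pure), such that for any facet ordering the complex is strongly connected, i.e., any two facets are joined by a sequence of facets in which consecutive ones intersect in a face of dimension d−2. Then there exists a facet ordering ≺ with Σ_{j=2}^m (dim σ_j − conn_≺ σ_j) = 0, and consequently L(X) ≤ m − |V(X)| + d = deg − codim + 1, where deg = m is the number of facets and codim = |V(X)| − d. -/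
open Finset

variable {V : Type*} [DecidableEq V] [Fintype V]

/-!
Order the facets so that each one after the first meets an earlier one in `d - 1` vertices:
strong connectivity lets one always reach an unused facet through a codimension-one step.
For such an order every defect `dim σ_j - conn σ_j` vanishes. Build `X` by attaching the facets
in this order. By Mayer–Vietoris, `L(Y ∪ Δτ) ≤ max (L Y) (L (Y[τ]) + 1)`. If `τ` brings a new
vertex, `Y[τ]` is the simplex on the common `(d-2)`-face and the bound on `L` does not grow;
otherwise it grows by at most one. Hence `L + |V|` grows by at most one per facet, starting
from `1 + d` (for a single simplex we use the bound `1`).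
-/

lemma mem_bdry {c : Finset (Finset V)} {τ : Finset V} :
    τ ∈ bdry c ↔ Odd #(c.filter (fun s => τ ⊆ s ∧ s.card = τ.card + 1)) := by
  simp [bdry]

lemma exists_mem_of_mem_bdry {c : Finset (Finset V)} {τ : Finset V} (h : τ ∈ bdry c) :
    ∃ s ∈ c, τ ⊆ s ∧ s.card = τ.card + 1 := by
  obtain ⟨s, hs⟩ := card_pos.mp (mem_bdry.mp h).pos
  exact ⟨s, (mem_filter.mp hs).1, (mem_filter.mp hs).2⟩

omit [Fintype V] in
lemma chAdd_eq_symmDiff (c d : Finset (Finset V)) : chAdd c d = symmDiff c d := rfl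

omit [Fintype V] in
lemma chAdd_eq_empty_iff {c d : Finset (Finset V)} : chAdd c d = ∅ ↔ c = d :=
  symmDiff_eq_empty

lemma odd_card_symmDiff_iff {α : Type*} [DecidableEq α] (s t : Finset α) :
    Odd #(symmDiff s t) ↔ (Odd #s ↔ ¬Odd #t) := by
  have hs := card_sdiff_add_card_inter s t
  have ht := card_sdiff_add_card_inter t s
  rw [inter_comm] at ht
  rw [Finset.symmDiff_def, card_union_of_disjoint disjoint_sdiff_sdiff]
  simp only [Nat.odd_iff]
  omega

lemma bdry_chAdd (c d : Finset (Finset V)) : bdry (chAdd c d) = chAdd (bdry c) (bdry d) := by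
  ext τ
  have filter_symmDiff : ∀ (p : Finset V → Prop) [DecidablePred p],
      (symmDiff c d).filter p = symmDiff (c.filter p) (d.filter p) := by
    intro p _; ext; simp only [mem_filter, mem_symmDiff]; tauto
  simp only [chAdd_eq_symmDiff, mem_symmDiff, mem_bdry, filter_symmDiff, odd_card_symmDiff_iff]
  tauto

lemma filter_between_eq_image {τ u : Finset V} (h : τ ⊆ u) :
    univ.filter (fun s => (τ ⊆ s ∧ s.card = τ.card + 1) ∧ s ⊆ u) =
      (u \ τ).image (insert · τ) := by
  ext s
  simp only [mem_filter, mem_univ, true_and, mem_image, mem_sdiff]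
  constructor
  · rintro ⟨⟨hτs, hcard⟩, hsu⟩
    obtain ⟨x, hx⟩ := card_eq_one.mp (show #(s \ τ) = 1 by rw [card_sdiff_of_subset hτs]; omega)
    have hxs : x ∈ s \ τ := hx ▸ mem_singleton_self x
    refine ⟨x, ⟨hsu (mem_sdiff.mp hxs).1, (mem_sdiff.mp hxs).2⟩, ?_⟩
    refine eq_of_subset_of_card_le (insert_subset (mem_sdiff.mp hxs).1 hτs) ?_
    rw [card_insert_of_notMem (mem_sdiff.mp hxs).2]
    omega
  · rintro ⟨x, ⟨hxu, hxτ⟩, rfl⟩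
    exact ⟨⟨subset_insert x τ, card_insert_of_notMem hxτ⟩, insert_subset hxu h⟩

lemma even_card_between (τ u : Finset V) :
    Even #(univ.filter (fun s => (τ ⊆ s ∧ s.card = τ.card + 1) ∧ s ⊆ u ∧ u.card = s.card + 1)) := by
  by_cases h : τ ⊆ u ∧ u.card = τ.card + 2
  · have hfilter :
        univ.filter (fun s => (τ ⊆ s ∧ s.card = τ.card + 1) ∧ s ⊆ u ∧ u.card = s.card + 1) =
          univ.filter (fun s => (τ ⊆ s ∧ s.card = τ.card + 1) ∧ s ⊆ u) := by
      refine filter_congr fun s _ => ?_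
      constructor
      · exact fun hs => ⟨hs.1, hs.2.1⟩
      · exact fun hs => ⟨hs.1, hs.2, by omega⟩
    rw [hfilter, filter_between_eq_image h.1, card_image_of_injOn, card_sdiff_of_subset h.1, h.2]
    · simp
    · intro x hx y _ hxy
      have hx : x ∉ τ := (mem_sdiff.mp hx).2
      have : x ∈ insert y τ := (show insert x τ = insert y τ from hxy) ▸ mem_insert_self x τ
      exact (mem_insert.mp this).resolve_right hx
  · rw [filter_false_of_mem fun s _ hs => h ⟨hs.1.1.trans hs.2.1, by omega⟩]
    simp

lemma bdry_bdry (c : Finset (Finset V)) : bdry (bdry c) = ∅ := by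
  ext τ
  simp only [notMem_empty, iff_false, mem_bdry, Nat.not_odd_iff_even]
  let S := univ.filter (fun s : Finset V => τ ⊆ s ∧ s.card = τ.card + 1)
  have hS : (bdry c).filter (fun s => τ ⊆ s ∧ s.card = τ.card + 1) =
      S.filter (fun s => Odd #(c.filter (fun u => s ⊆ u ∧ u.card = s.card + 1))) := by
    ext s; simp only [S, mem_filter, mem_bdry, mem_univ, true_and]; tauto
  rw [hS, ← Nat.not_odd_iff_even, ← odd_sum_iff_odd_card_odd, Nat.not_odd_iff_even]
  have double_count := sum_card_bipartiteAbove_eq_sum_card_bipartiteBelow (s := S) (t := c)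
    (r := fun s u => s ⊆ u ∧ u.card = s.card + 1)
  simp only [bipartiteAbove, bipartiteBelow] at double_count
  rw [double_count]
  refine even_sum _ fun u _ => ?_
  simpa only [S, filter_filter] using even_card_between τ u

omit [Fintype V] in
lemma card_filter_erase_subset {v : V} {τ : Finset V} (hv : v ∈ τ) (c : Finset (Finset V)) :
    #(c.filter fun t => τ.erase v ⊆ t ∧ t.card = (τ.erase v).card + 1) =
      #(c.filter fun t => v ∉ t ∧ τ ⊆ insert v t ∧ (insert v t).card = τ.card + 1) +
        if τ ∈ c then 1 else 0 := by
  have hcard := card_erase_add_one hv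
  have hwith : (c.filter fun t => τ.erase v ⊆ t ∧ t.card = (τ.erase v).card + 1).filter
      (fun t => v ∈ t) = c.filter (· = τ) := by
    rw [filter_filter]
    refine filter_congr fun t _ => ⟨fun ⟨⟨hτt, ht⟩, hvt⟩ => ?_, ?_⟩
    · rw [← insert_erase hv]
      exact (eq_of_subset_of_card_le (insert_subset hvt hτt)
        (by rw [insert_erase hv]; omega)).symm
    · rintro rfl
      exact ⟨⟨erase_subset v t, hcard.symm⟩, hv⟩
  have hwithout : (c.filter fun t => τ.erase v ⊆ t ∧ t.card = (τ.erase v).card + 1).filter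
      (fun t => v ∉ t) =
      c.filter (fun t => v ∉ t ∧ τ ⊆ insert v t ∧ (insert v t).card = τ.card + 1) := by
    rw [filter_filter]
    refine filter_congr fun t _ => ?_
    by_cases hvt : v ∉ t
    · simp only [hvt, card_insert_of_notMem hvt, subset_insert_iff, ← hcard,
        Nat.add_right_cancel_iff]
      tauto
    · simp only [hvt, false_and, and_false]
  rw [← card_filter_add_card_filter_not (fun t => v ∈ t), hwith, hwithout, filter_eq']
  split_ifs <;> simp [add_comm]

lemma bdry_cone (v : V) {c : Finset (Finset V)} (hc : bdry c = ∅) :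
    bdry ((c.filter (v ∉ ·)).image (insert v)) = c := by
  have hinj : Set.InjOn (insert v) (c.filter (v ∉ ·) : Set (Finset V)) := by
    intro x hx y hy hxy
    rw [← erase_insert (mem_filter.mp hx).2, ← erase_insert (mem_filter.mp hy).2]
    exact congrArg (·.erase v) hxy
  ext τ
  rw [mem_bdry, filter_image, card_image_of_injOn (hinj.mono (filter_subset _ _)), filter_filter]
  by_cases hv : v ∈ τ
  · have heven : ¬Odd #(c.filter fun t => τ.erase v ⊆ t ∧ t.card = (τ.erase v).card + 1) := by
      rw [← mem_bdry, hc]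
      exact notMem_empty _
    rw [card_filter_erase_subset hv] at heven
    split_ifs at heven with hτc <;> simp only [hτc, iff_true, iff_false, Nat.odd_iff] at heven ⊢
      <;> omega
  · have hfilter : c.filter (fun t => v ∉ t ∧ τ ⊆ insert v t ∧ (insert v t).card = τ.card + 1) =
        c.filter (· = τ) := by
      refine filter_congr fun t _ => ⟨fun ⟨hvt, hτt, ht⟩ => ?_, ?_⟩
      · rw [card_insert_of_notMem hvt] at ht
        exact (eq_of_subset_of_card_le ((subset_insert_iff_of_notMem hv).mp hτt) (by omega)).symm
      · rintro rfl
        exact ⟨hv, subset_insert v t, card_insert_of_notMem hv⟩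
    rw [hfilter, filter_eq']
    split_ifs with hτc <;> simp [hτc]

omit [DecidableEq V] [Fintype V] in
lemma IsNChain.mono {X Y c : Finset (Finset V)} {n : ℕ} (hc : IsNChain X n c) (h : X ⊆ Y) :
    IsNChain Y n c :=
  ⟨hc.1.trans h, hc.2⟩

omit [Fintype V] in
lemma IsNChain.inter {X Y c : Finset (Finset V)} {n : ℕ} (hX : IsNChain X n c)
    (hY : IsNChain Y n c) : IsNChain (X ∩ Y) n c :=
  ⟨subset_inter hX.1 hY.1, hX.2⟩

omit [Fintype V] in
lemma IsNChain.add {X c d : Finset (Finset V)} {n : ℕ} (hc : IsNChain X n c)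
    (hd : IsNChain X n d) : IsNChain X n (chAdd c d) := by
  refine ⟨union_subset (sdiff_subset.trans hc.1) (sdiff_subset.trans hd.1), fun s hs => ?_⟩
  rcases mem_union.mp hs with hs | hs
  · exact hc.2 s (mem_sdiff.mp hs).1
  · exact hd.2 s (mem_sdiff.mp hs).1

omit [Fintype V] in
lemma IsNChain.exists_chAdd_of_union {A B c : Finset (Finset V)} {n : ℕ}
    (hc : IsNChain (A ∪ B) n c) :
    ∃ a b, IsNChain A n a ∧ IsNChain B n b ∧ chAdd a b = c := by
  refine ⟨c \ B, c ∩ B, ⟨fun s hs => ?_, fun s hs => hc.2 s (mem_sdiff.mp hs).1⟩,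
    ⟨inter_subset_right, fun s hs => hc.2 s (mem_inter.mp hs).1⟩, ?_⟩
  · exact (mem_union.mp (hc.1 (mem_sdiff.mp hs).1)).resolve_right (mem_sdiff.mp hs).2
  · ext s
    simp only [chAdd, mem_union, mem_sdiff, mem_inter]
    tauto

lemma IsComplex.isNChain_bdry {X c : Finset (Finset V)} {n : ℕ} (hX : IsComplex X)
    (hc : IsNChain X (n + 1) c) : IsNChain X n (bdry c) := by
  refine ⟨fun τ hτ => ?_, fun τ hτ => ?_⟩ <;>
    obtain ⟨s, hs, hτs, hcard⟩ := exists_mem_of_mem_bdry hτ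
  · exact hX s (hc.1 hs) τ hτs
  · have := hc.2 s hs
    omega

omit [DecidableEq V] [Fintype V] in
lemma isComplex_powerset (τ : Finset V) : IsComplex τ.powerset :=
  fun _ hs _ hts => mem_powerset.mpr (hts.trans (mem_powerset.mp hs))

omit [Fintype V] in
lemma isComplex_indOn {X : Finset (Finset V)} (hX : IsComplex X) (W : Finset V) :
    IsComplex (indOn X W) := by
  intro s hs t hts
  rw [indOn, mem_filter] at hs ⊢
  exact ⟨hX s hs.1 t hts, hts.trans hs.2⟩

omit [Fintype V] in
lemma indOn_indOn (X : Finset (Finset V)) (U W : Finset V) :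
    indOn (indOn X U) W = indOn X (U ∩ W) := by
  ext s
  simp only [indOn, mem_filter, subset_inter_iff, and_assoc]

omit [Fintype V] in
lemma indOn_union (X Y : Finset (Finset V)) (W : Finset V) :
    indOn (X ∪ Y) W = indOn X W ∪ indOn Y W :=
  filter_union _ _ _

omit [Fintype V] in
lemma indOn_powerset (τ W : Finset V) : indOn τ.powerset W = (τ ∩ W).powerset := by
  ext s
  simp only [indOn, mem_filter, mem_powerset, subset_inter_iff]

omit [Fintype V] in
lemma indOn_inter_indOn_powerset (X : Finset (Finset V)) (τ W : Finset V) :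
    indOn X W ∩ indOn τ.powerset W = indOn (indOn X τ) W := by
  ext s
  simp only [indOn, mem_inter, mem_filter, mem_powerset]
  tauto

lemma IsLeray.mono {X : Finset (Finset V)} {k k' : ℕ} (h : IsLeray X k) (hk : k ≤ k') :
    IsLeray X k' :=
  fun W i hi => h W i (hk.trans hi)

lemma isLeray_indOn {X : Finset (Finset V)} {k : ℕ} (h : IsLeray X k) (U : Finset V) :
    IsLeray (indOn X U) k := by
  intro W i hi c hc
  rw [indOn_indOn] at hc ⊢
  exact h (U ∩ W) i hi c hc

lemma isLeray_powerset (τ : Finset V) : IsLeray τ.powerset 0 := by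
  intro W i _ c ⟨⟨hcW, hcard⟩, hcyc⟩
  rw [indOn_powerset] at hcW ⊢
  obtain rfl | ⟨s, hs⟩ := c.eq_empty_or_nonempty
  · exact ⟨∅, ⟨empty_subset _, by simp⟩, by ext; simp [mem_bdry]⟩
  obtain ⟨v, hv⟩ := card_pos.mp (show 0 < #s by rw [hcard s hs]; omega)
  have hvτW : v ∈ τ ∩ W := mem_powerset.mp (hcW hs) hv
  refine ⟨(c.filter (v ∉ ·)).image (insert v), ⟨fun t ht => ?_, fun t ht => ?_⟩, bdry_cone v hcyc⟩
    <;> obtain ⟨u, hu, rfl⟩ := mem_image.mp ht <;> rw [mem_filter] at hu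
  · exact mem_powerset.mpr (insert_subset hvτW (mem_powerset.mp (hcW hu.1)))
  · rw [card_insert_of_notMem hu.2, hcard u hu.1]

lemma IsLeray.union_powerset {Y : Finset (Finset V)} (hY : IsComplex Y) {τ : Finset V} {k : ℕ}
    (hk : 1 ≤ k) (hYk : IsLeray Y k) (hτ : IsLeray (indOn Y τ) (k - 1)) :
    IsLeray (Y ∪ τ.powerset) k := by
  intro W i hi c ⟨hc, hcyc⟩
  obtain ⟨j, rfl⟩ : ∃ j, i = j + 1 := ⟨i - 1, by omega⟩
  rw [indOn_union] at hc ⊢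
  obtain ⟨a, b, ha, hb, rfl⟩ := hc.exists_chAdd_of_union
  have hab : bdry a = bdry b := by rwa [bdry_chAdd, chAdd_eq_empty_iff] at hcyc
  -- Mayer–Vietoris: the common boundary `∂a = ∂b` is a cycle of `Y[τ]`; once it is filled by
  -- `e`, the cycles `a + e` of `Y` and `b + e` of `Δτ` are filled by `f` and `g`.
  have hw : IsNCycle (indOn (indOn Y τ) W) j (bdry b) := by
    refine ⟨?_, bdry_bdry b⟩
    rw [← indOn_inter_indOn_powerset]
    exact (hab ▸ (isComplex_indOn hY W).isNChain_bdry ha).inter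
      ((isComplex_indOn (isComplex_powerset τ) W).isNChain_bdry hb)
  obtain ⟨e, he, hbe⟩ := hτ W j (by omega) (bdry b) hw
  rw [← indOn_inter_indOn_powerset] at he
  obtain ⟨f, hf, hfa⟩ := hYk W (j + 1) hi (chAdd a e)
    ⟨ha.add (he.mono inter_subset_left), by rw [bdry_chAdd, hbe, hab, chAdd_eq_empty_iff]⟩
  obtain ⟨g, hg, hgb⟩ := isLeray_powerset τ W (j + 1) (Nat.zero_le _) (chAdd b e)
    ⟨hb.add (he.mono inter_subset_right), by rw [bdry_chAdd, hbe, chAdd_eq_empty_iff]⟩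
  refine ⟨chAdd f g, (hf.mono subset_union_left).add (hg.mono subset_union_right), ?_⟩
  rw [bdry_chAdd, hfa, hgb]
  simp only [chAdd_eq_symmDiff]
  rw [symmDiff_symmDiff_symmDiff_comm, symmDiff_self, symmDiff_bot]

omit [Fintype V] in
lemma biUnion_id_powerset (τ : Finset V) : τ.powerset.biUnion id = τ :=
  (biUnion_id_subset_iff_subset_powerset.mpr subset_rfl).antisymm
    (subset_biUnion_of_mem id (mem_powerset_self τ))

omit [Fintype V] in
lemma indOn_eq_powerset_inter {Y : Finset (Finset V)} (hY : IsComplex Y) {τ ρ : Finset V}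
    {v : V} (hρ : ρ ∈ Y) (hτρ : #τ ≤ #(τ ∩ ρ) + 1) (hv : v ∈ τ) (hvY : v ∉ Y.biUnion id) :
    indOn Y τ = (τ ∩ ρ).powerset := by
  have hvY' : ∀ s ∈ Y, v ∉ s := fun s hs hvs => hvY (mem_biUnion.mpr ⟨s, hs, hvs⟩)
  have hτρ_eq : τ ∩ ρ = τ.erase v := by
    refine eq_of_subset_of_card_le (fun x hx => mem_erase.mpr ⟨?_, (mem_inter.mp hx).1⟩) ?_
    · rintro rfl
      exact hvY' ρ hρ (mem_inter.mp hx).2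
    · rw [card_erase_of_mem hv]
      omega
  ext s
  simp only [indOn, mem_filter, mem_powerset, hτρ_eq]
  constructor
  · rintro ⟨hs, hsτ⟩
    exact subset_erase.mpr ⟨hsτ, hvY' s hs⟩
  · intro hs
    rw [← hτρ_eq] at hs
    exact ⟨hY ρ hρ s (hs.trans inter_subset_right), hs.trans inter_subset_left⟩

lemma exists_isLeray_union_powerset {Y : Finset (Finset V)} (hY : IsComplex Y) {k : ℕ}
    (hk : 1 ≤ k) (hYk : IsLeray Y k) {τ ρ : Finset V} (hρ : ρ ∈ Y) (hτρ : #τ ≤ #(τ ∩ ρ) + 1) :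
    ∃ k', 1 ≤ k' ∧ IsLeray (Y ∪ τ.powerset) k' ∧
      k' + #((Y ∪ τ.powerset).biUnion id) ≤ k + #(Y.biUnion id) + 1 := by
  rw [union_biUnion, biUnion_id_powerset]
  by_cases hτY : τ ⊆ Y.biUnion id
  · refine ⟨k + 1, by omega, IsLeray.union_powerset hY (by omega) (hYk.mono (by omega)) ?_, ?_⟩
    · simpa only [Nat.add_sub_cancel] using isLeray_indOn hYk τ
    · rw [union_eq_left.mpr hτY]
      omega
  · obtain ⟨v, hvτ, hvY⟩ := not_subset.mp hτY
    refine ⟨k, hk, IsLeray.union_powerset hY hk hYk ?_, ?_⟩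
    · rw [indOn_eq_powerset_inter hY hρ hτρ hvτ hvY]
      exact (isLeray_powerset _).mono (Nat.zero_le _)
    · have hρY : ρ ⊆ Y.biUnion id := subset_biUnion_of_mem id hρ
      have hnew : #(τ \ Y.biUnion id) ≤ 1 := calc
        #(τ \ Y.biUnion id) ≤ #(τ \ ρ) := card_le_card (sdiff_subset_sdiff subset_rfl hρY)
        _ = #τ - #(ρ ∩ τ) := card_sdiff
        _ ≤ 1 := by rw [inter_comm]; omega
      rw [union_comm, ← card_sdiff_add_card]
      omega

lemma exists_step_out {p : ℕ → Prop} {ℓ : ℕ} (h0 : p 0) (hℓ : ¬p ℓ) :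
    ∃ t < ℓ, p t ∧ ¬p (t + 1) := by
  induction ℓ with
  | zero => exact absurd h0 hℓ
  | succ ℓ ih =>
    by_cases h : p ℓ
    · exact ⟨ℓ, lt_add_one ℓ, h, hℓ⟩
    · obtain ⟨t, ht, hpt⟩ := ih h
      exact ⟨t, by omega, hpt⟩

lemma exists_adj_notMem_image {m n : ℕ} (hn : 1 ≤ n) (hnm : n < m) (r : ℕ → ℕ → Prop)
    (hr : ∀ i j, i < m → j < m → ∃ (ℓ : ℕ) (ρ : ℕ → ℕ), ρ 0 = i ∧ ρ ℓ = j ∧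
      (∀ t, t ≤ ℓ → ρ t < m) ∧ ∀ t, t < ℓ → r (ρ t) (ρ (t + 1)))
    {f : ℕ → ℕ} (hmaps : Set.MapsTo f (range n) (range m)) :
    ∃ y < m, y ∉ (range n).image f ∧ ∃ i < n, r (f i) y := by
  obtain ⟨x, hxm, hxf⟩ : ∃ x ∈ range m, x ∉ (range n).image f :=
    exists_mem_notMem_of_card_lt_card (by
      calc #((range n).image f) ≤ n := card_image_le.trans (card_range n).le
        _ < #(range m) := by rw [card_range]; omega)
  obtain ⟨ℓ, ρ, hρ0, hρℓ, hρm, hρr⟩ :=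
    hr (f 0) x (mem_range.mp (hmaps (by simp; omega))) (mem_range.mp hxm)
  obtain ⟨t, htℓ, hin, hout⟩ := exists_step_out (p := fun t => ρ t ∈ (range n).image f)
    (by rw [hρ0]; exact mem_image_of_mem f (mem_range.mpr (by omega))) (by rwa [hρℓ])
  obtain ⟨i, hi, hfi⟩ := mem_image.mp hin
  exact ⟨ρ (t + 1), hρm (t + 1) htℓ, hout, i, mem_range.mp hi, hfi ▸ hρr t htℓ⟩

lemma exists_bijOn_adj_earlier {m : ℕ} (hm : 1 ≤ m) (r : ℕ → ℕ → Prop)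
    (hr : ∀ i j, i < m → j < m → ∃ (ℓ : ℕ) (ρ : ℕ → ℕ), ρ 0 = i ∧ ρ ℓ = j ∧
      (∀ t, t ≤ ℓ → ρ t < m) ∧ ∀ t, t < ℓ → r (ρ t) (ρ (t + 1))) :
    ∃ f : ℕ → ℕ, Set.BijOn f (range m) (range m) ∧
      ∀ j, 1 ≤ j → j < m → ∃ i < j, r (f i) (f j) := by
  suffices h : ∀ n, 1 ≤ n → n ≤ m → ∃ f : ℕ → ℕ, Set.MapsTo f (range n) (range m) ∧
      Set.InjOn f (range n) ∧ ∀ j, 1 ≤ j → j < n → ∃ i < j, r (f i) (f j) by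
    obtain ⟨f, hmaps, hinj, hadj⟩ := h m hm le_rfl
    exact ⟨f, ((finite_toSet _).injOn_iff_bijOn_of_mapsTo hmaps).mp hinj, hadj⟩
  intro n hn
  induction n, hn using Nat.le_induction with
  | base =>
    intro _
    refine ⟨fun _ => 0, fun _ _ => by simp; omega, fun i hi j hj _ => ?_, fun j _ _ => by omega⟩
    simp only [coe_range, Set.mem_Iio] at hi hj
    omega
  | succ n hn ih =>
    intro hnm
    obtain ⟨f, hmaps, hinj, hadj⟩ := ih (by omega)
    obtain ⟨y, hym, hyf, i, hi, hiy⟩ := exists_adj_notMem_image hn hnm r hr hmaps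
    have heq : Set.EqOn (Function.update f n y) f (range n) := fun j hj =>
      Function.update_of_ne (by simp only [coe_range, Set.mem_Iio] at hj; omega) _ _
    refine ⟨Function.update f n y, ?_, ?_, fun j hj1 hjn => ?_⟩
    · rw [range_add_one, coe_insert]
      rintro j (rfl | hj)
      · simpa using hym
      · rw [heq hj]
        exact hmaps hj
    · rw [range_add_one, coe_insert, Set.injOn_insert (by simp), heq.injOn_iff, heq.image_eq,
        Function.update_self, ← coe_image]
      exact ⟨hinj, hyf⟩
    · rcases (by omega : j < n ∨ j = n) with hj | rfl
      · obtain ⟨i', hi', h⟩ := hadj j hj1 hj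
        refine ⟨i', hi', ?_⟩
        rwa [heq (by simp; omega), heq (by simp; omega)]
      · refine ⟨i, hi, ?_⟩
        rwa [Function.update_self, heq (by simpa using hi)]

lemma IsFacetEnum.comp {X : Finset (Finset V)} {m : ℕ} {σ : ℕ → Finset V}
    (h : IsFacetEnum X m σ) {f : ℕ → ℕ} (hf : Set.BijOn f (range m) (range m)) :
    IsFacetEnum X m (fun j => σ (f j)) := by
  refine ⟨fun i hi => h.1 _ (mem_range.mp (hf.mapsTo (mem_range.mpr hi))), fun s hs => ?_,
    fun i j hi hj hij => hf.injOn (mem_range.mpr hi) (mem_range.mpr hj) ?_⟩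
  · obtain ⟨i, hi, rfl⟩ := h.2.1 s hs
    obtain ⟨j, hj, hji⟩ := hf.surjOn (mem_range.mpr hi)
    exact ⟨j, mem_range.mp hj, congrArg σ hji⟩
  · exact h.2.2 _ _ (mem_range.mp (hf.mapsTo (mem_range.mpr hi)))
      (mem_range.mp (hf.mapsTo (mem_range.mpr hj))) hij

omit [Fintype V] in
lemma cUnion_add_one (g : ℕ → Finset V) (n : ℕ) :
    cUnion g (n + 1) = cUnion g n ∪ (g n).powerset := by
  rw [cUnion, cUnion, range_add_one, biUnion_insert, union_comm]

omit [Fintype V] in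
lemma mem_cUnion_of_lt (g : ℕ → Finset V) {i n : ℕ} (h : i < n) : g i ∈ cUnion g n :=
  mem_biUnion.mpr ⟨i, mem_range.mpr h, mem_powerset_self _⟩

omit [Fintype V] in
lemma isComplex_cUnion (g : ℕ → Finset V) (n : ℕ) : IsComplex (cUnion g n) := by
  intro s hs t hts
  obtain ⟨i, hi, hsi⟩ := mem_biUnion.mp hs
  exact mem_biUnion.mpr ⟨i, hi, isComplex_powerset _ s hsi t hts⟩

lemma IsFacetEnum.eq_cUnion {X : Finset (Finset V)} (hX : IsComplex X) {m : ℕ}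
    {σ : ℕ → Finset V} (h : IsFacetEnum X m σ) : X = cUnion σ m := by
  ext s
  simp only [cUnion, mem_biUnion, mem_range, mem_powerset]
  constructor
  · intro hs
    obtain ⟨t, hst, hmax⟩ := X.exists_le_maximal hs
    obtain ⟨i, hi, rfl⟩ := h.2.1 t (mem_filter.mpr ⟨hmax.prop, fun u hu htu =>
      le_antisymm htu (hmax.2 hu htu)⟩)
    exact ⟨i, hi, hst⟩
  · rintro ⟨i, hi, hsi⟩
    exact hX _ (mem_filter.mp (h.1 i hi)).1 s hsi

theorem exists_isLeray_cUnion {g : ℕ → Finset V} {n d : ℕ} (hn : 1 ≤ n)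
    (hpure : ∀ i < n, #(g i) = d) (hadj : ∀ j, 1 ≤ j → j < n → ∃ i < j, #(g i ∩ g j) = d - 1) :
    ∃ k, 1 ≤ k ∧ IsLeray (cUnion g n) k ∧ k + #((cUnion g n).biUnion id) ≤ n + d := by
  induction n, hn using Nat.le_induction with
  | base =>
    have hsimplex : cUnion g 1 = (g 0).powerset := by simp [cUnion]
    refine ⟨1, le_rfl, ?_, ?_⟩ <;> rw [hsimplex]
    · exact (isLeray_powerset _).mono (Nat.zero_le 1)
    · rw [biUnion_id_powerset, hpure 0 zero_lt_one]
  | succ n hn ih =>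
    obtain ⟨k, hk, hkL, hkcard⟩ :=
      ih (fun i hi => hpure i (by omega)) (fun j h1 h2 => hadj j h1 (by omega))
    obtain ⟨i, hi, hcard⟩ := hadj n hn (by omega)
    obtain ⟨k', hk', hk'L, hk'card⟩ := exists_isLeray_union_powerset (τ := g n)
      (isComplex_cUnion g n) hk hkL (mem_cUnion_of_lt g hi)
      (by rw [inter_comm, hcard, hpure n (by omega)]; omega)
    rw [cUnion_add_one]
    exact ⟨k', hk', hk'L, by omega⟩

omit [Fintype V] in
lemma card_inter_lt_of_ne {A B : Finset V} {d : ℕ} (hA : #A = d) (hB : #B = d) (hne : A ≠ B) :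
    #(A ∩ B) < d := by
  refine (hA ▸ card_le_card inter_subset_left).lt_of_ne fun h => hne ?_
  exact (eq_of_subset_of_card_le inter_subset_left (by omega)).symm.trans
    (eq_of_subset_of_card_le inter_subset_right (by omega))

omit [Fintype V] in
lemma sup_card_inter_add_one {σ : ℕ → Finset V} {m d j : ℕ} (hpure : ∀ i < m, #(σ i) = d)
    (hinj : ∀ i j, i < m → j < m → σ i = σ j → i = j) (hjm : j < m)
    (hadj : ∃ i < j, #(σ i ∩ σ j) = d - 1) :
    (range j).sup (fun i => #(σ i ∩ σ j)) + 1 = d := by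
  obtain ⟨i, hi, hcard⟩ := hadj
  have hlt : ∀ i < j, #(σ i ∩ σ j) < d := fun i hi =>
    card_inter_lt_of_ne (hpure i (by omega)) (hpure j hjm)
      fun h => by have := hinj i j (by omega) hjm h; omega
  have hle : (range j).sup (fun i => #(σ i ∩ σ j)) ≤ d - 1 :=
    Finset.sup_le fun i hi => Nat.le_sub_one_of_lt (hlt i (mem_range.mp hi))
  have hge : d - 1 ≤ (range j).sup (fun i => #(σ i ∩ σ j)) :=
    hcard ▸ le_sup (f := fun i => #(σ i ∩ σ j)) (mem_range.mpr hi)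
  have := hlt i hi
  omega

/-- a pure strongly connected complex admits a facet ordering with
`Σ (dim σ_j − conn_≺ σ_j) = 0`, and consequently `L(X) ≤ m − |V(X)| + d`
(the Eisenbud–Goto bound `deg − codim + 1`). -/
theorem pure_strongly_connected_EG (X : Finset (Finset V)) (m d : ℕ)
    (σ : ℕ → Finset V) (hX : IsComplex X) (hm : 1 ≤ m) (henum : IsFacetEnum X m σ)
    (hpure : ∀ i, i < m → (σ i).card = d)
    (hsc : ∀ i j, i < m → j < m → ∃ (ℓ : ℕ) (ρ : ℕ → ℕ), ρ 0 = i ∧ ρ ℓ = j ∧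
      (∀ t, t ≤ ℓ → ρ t < m) ∧ ∀ t, t < ℓ → (σ (ρ t) ∩ σ (ρ (t+1))).card = d - 1) :
    (∃ τ : ℕ → Finset V, IsFacetEnum X m τ ∧
      ∑ j ∈ Finset.Ico 1 m, (((τ j).card : ℤ) - 1 -
        ((Finset.range j).sup (fun i => (τ i ∩ τ j).card) : ℕ)) = 0) ∧
    (lerayNum X : ℤ) ≤ (m : ℤ) - (X.biUnion id).card + d := by
  obtain ⟨f, hf, hadj⟩ := exists_bijOn_adj_earlier hm (fun a b => #(σ a ∩ σ b) = d - 1) hsc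
  have henumτ := henum.comp hf
  have hpureτ : ∀ i < m, #(σ (f i)) = d :=
    fun i hi => hpure _ (mem_range.mp (hf.mapsTo (mem_range.mpr hi)))
  refine ⟨⟨_, henumτ, sum_eq_zero fun j hj => ?_⟩, ?_⟩
  · obtain ⟨hj1, hjm⟩ := mem_Ico.mp hj
    have hsup := sup_card_inter_add_one hpureτ henumτ.2.2 hjm (hadj j hj1 hjm)
    rw [hpureτ j hjm]
    omega
  · obtain ⟨k, -, hkL, hk⟩ := exists_isLeray_cUnion hm hpureτ hadj
    rw [← henumτ.eq_cUnion hX] at hkL hk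
    have hL : lerayNum X ≤ k := Nat.sInf_le hkL
    omega
end
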